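/- arXiv:2509.02787 — 5 statements merged into one kernel-verified Lean document; each statement's English description precedes it below -/
import Mathlib

section
/- Let 𝒜 be a bounded family of homogeneous maps on a wedge W in a real normed space. Then limsup_{n → ∞} sup_{f ∈ 𝒜^n} r(f)^{1/n} = sup_{m > 0} sup_{f ∈ 𝒜^m} r(f)^{1/m}, where r(f) denotes the Bonsall cone spectral radius of f. (This common value is the generalized spectral radius r(𝒜).) -/
open Filter Topology Set

noncomputable section

/-- A wedge in a real normed space: a convex set closed under positive scalar multiplication. -/
def IsWedge {X : Type*} [NormedAddCommGroup X] [NormedSpace ℝ X] (W : Set X) : Prop :=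
  Convex ℝ W ∧ ∀ c : ℝ, 0 < c → ∀ x ∈ W, c • x ∈ W

/-- A closed cone: closed, convex, closed under positive scalar multiplication, K ∩ (−K) = {0}. -/
def IsClosedCone {X : Type*} [NormedAddCommGroup X] [NormedSpace ℝ X] (K : Set X) : Prop :=
  IsClosed K ∧ Convex ℝ K ∧ (∀ c : ℝ, 0 < c → ∀ x ∈ K, c • x ∈ K) ∧ K ∩ (-K) = {0}

/-- A polyhedral cone: intersection of finitely many closed halfspaces through the origin. -/
def IsPolyhedralCone {X : Type*} [NormedAddCommGroup X] [NormedSpace ℝ X] (K : Set X) : Prop :=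
  ∃ (k : ℕ) (φ : Fin k → (X →ₗ[ℝ] ℝ)), K = {x | ∀ i, 0 ≤ φ i x}

/-- `f` maps `W` into itself and is positively homogeneous on `W`. -/
def HomogOn {X : Type*} [NormedAddCommGroup X] [NormedSpace ℝ X] (f : X → X) (W : Set X) : Prop :=
  Set.MapsTo f W W ∧ ∀ c : ℝ, 0 < c → ∀ x ∈ W, f (c • x) = c • f x

/-- `f` is order-preserving with respect to the order induced by the cone `K`. -/
def OrderPresOn {X : Type*} [NormedAddCommGroup X] [NormedSpace ℝ X] (f : X → X) (K : Set X) : Prop :=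
  ∀ x ∈ K, ∀ y ∈ K, y - x ∈ K → f y - f x ∈ K

/-- `f` is subadditive on `K`: f(x+y) ≤ f(x)+f(y) in the cone order. -/
def SubaddOn {X : Type*} [NormedAddCommGroup X] [NormedSpace ℝ X] (f : X → X) (K : Set X) : Prop :=
  ∀ x ∈ K, ∀ y ∈ K, (f x + f y) - f (x + y) ∈ K

/-- The norm of a homogeneous map on `W`: sup of ‖f x‖ over unit vectors of `W`. -/
def opNormW {X : Type*} [NormedAddCommGroup X] (f : X → X) (W : Set X) : ℝ :=
  sSup ((fun x => ‖f x‖) '' {x ∈ W | ‖x‖ = 1})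

/-- A bounded homogeneous map on `W`. -/
def BoundedMapOn {X : Type*} [NormedAddCommGroup X] (f : X → X) (W : Set X) : Prop :=
  ∃ C : ℝ, ∀ x ∈ W, ‖f x‖ ≤ C * ‖x‖

/-- A bounded family of homogeneous maps on `W`. -/
def BoundedFamOn {X : Type*} [NormedAddCommGroup X] (A : Set (X → X)) (W : Set X) : Prop :=
  ∃ C : ℝ, ∀ f ∈ A, ∀ x ∈ W, ‖f x‖ ≤ C * ‖x‖

/-- `famPow A m` = 𝒜^m, the set of m-fold compositions of maps from `A` (with 𝒜^0 = {id}). -/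
def famPow {X : Type*} (A : Set (X → X)) : ℕ → Set (X → X)
  | 0 => {id}
  | m + 1 => {h | ∃ f ∈ A, ∃ g ∈ famPow A m, h = f ∘ g}

/-- The composition of two families of maps. -/
def compFam {X : Type*} (A B : Set (X → X)) : Set (X → X) :=
  {h | ∃ f ∈ A, ∃ g ∈ B, h = f ∘ g}

/-- The Bonsall cone spectral radius r(f) = inf_{n>0} ‖f^n‖^{1/n}. -/
def coneSpecRad {X : Type*} [NormedAddCommGroup X] (f : X → X) (W : Set X) : ℝ :=
  ⨅ n : ℕ+, (opNormW (f^[(n : ℕ)]) W) ^ (((n : ℕ) : ℝ)⁻¹)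

/-- sup_{f ∈ 𝒜^m} ‖f‖^{1/m}. -/
def jointTerm {X : Type*} [NormedAddCommGroup X] (A : Set (X → X)) (W : Set X) (m : ℕ) : ℝ :=
  sSup ((fun f => (opNormW f W) ^ ((m : ℝ)⁻¹)) '' famPow A m)

/-- sup_{f ∈ 𝒜^m} r(f)^{1/m}. -/
def genTerm {X : Type*} [NormedAddCommGroup X] (A : Set (X → X)) (W : Set X) (m : ℕ) : ℝ :=
  sSup ((fun f => (coneSpecRad f W) ^ ((m : ℝ)⁻¹)) '' famPow A m)

/-- The joint spectral radius r̂(𝒜) = inf_{m>0} sup_{f ∈ 𝒜^m} ‖f‖^{1/m}. -/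
def jointRad {X : Type*} [NormedAddCommGroup X] (A : Set (X → X)) (W : Set X) : ℝ :=
  ⨅ m : ℕ+, jointTerm A W (m : ℕ)

/-- The generalized spectral radius r(𝒜) = sup_{m>0} sup_{f ∈ 𝒜^m} r(f)^{1/m}. -/
def genRad {X : Type*} [NormedAddCommGroup X] (A : Set (X → X)) (W : Set X) : ℝ :=
  ⨆ m : ℕ+, genTerm A W (m : ℕ)

/-- β_m = inf_{f ∈ 𝒜^m} ‖f‖. -/
def subBeta {X : Type*} [NormedAddCommGroup X] (A : Set (X → X)) (W : Set X) (m : ℕ) : ℝ :=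
  sInf ((fun f => opNormW f W) '' famPow A m)

/-- γ_m = inf_{f ∈ 𝒜^m} r(f). -/
def subGamma {X : Type*} [NormedAddCommGroup X] (A : Set (X → X)) (W : Set X) (m : ℕ) : ℝ :=
  sInf ((fun f => coneSpecRad f W) '' famPow A m)

/-- F_m^d = f_m ∘ ⋯ ∘ f_1 for a sequence d of maps. -/
def seqComp {X : Type*} (d : ℕ → X → X) : ℕ → X → X
  | 0 => id
  | m + 1 => d m ∘ seqComp d m

/-- The standard cone ℝⁿ_{≥0}. -/
def stdCone (n : ℕ) : Set (Fin n → ℝ) := {x | ∀ i, 0 ≤ x i}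

/-- The closed face F_J of the standard cone. -/
def stdFace {n : ℕ} (J : Set (Fin n)) : Set (Fin n → ℝ) :=
  {x | (∀ i, 0 ≤ x i) ∧ ∀ i ∉ J, x i = 0}

/-- A family of maps on ℝⁿ_{≥0} is irreducible if no non-trivial closed face is invariant
under every member of the family. -/
def IrreducibleFam {n : ℕ} (A : Set ((Fin n → ℝ) → Fin n → ℝ)) : Prop :=
  ¬ ∃ J : Set (Fin n), J.Nonempty ∧ J ≠ Set.univ ∧ ∀ f ∈ A, Set.MapsTo f (stdFace J) (stdFace J)

section Aux

variable {X : Type*} [NormedAddCommGroup X]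

lemma opNormW_nonneg (f : X → X) (W : Set X) : 0 ≤ opNormW f W :=
  Real.sSup_nonneg (by rintro y ⟨x, _, rfl⟩; exact norm_nonneg _)

lemma opNormW_le {f : X → X} {W : Set X} {D : ℝ} (hD : 0 ≤ D)
    (h : ∀ x ∈ W, ‖f x‖ ≤ D * ‖x‖) : opNormW f W ≤ D := by
  apply Real.sSup_le _ hD
  rintro y ⟨x, ⟨hx, hx1⟩, rfl⟩
  simpa [hx1] using h x hx

lemma coneSpecRad_nonneg (f : X → X) (W : Set X) : 0 ≤ coneSpecRad f W :=
  le_ciInf fun n => Real.rpow_nonneg (opNormW_nonneg _ _) _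

lemma coneSpecRad_bddBelow (f : X → X) (W : Set X) :
    BddBelow (Set.range fun n : ℕ+ => (opNormW (f^[(n : ℕ)]) W) ^ (((n : ℕ) : ℝ)⁻¹)) :=
  ⟨0, by rintro _ ⟨n, rfl⟩; exact Real.rpow_nonneg (opNormW_nonneg _ _) _⟩

lemma coneSpecRad_le (f : X → X) (W : Set X) (n : ℕ+) :
    coneSpecRad f W ≤ (opNormW (f^[(n : ℕ)]) W) ^ (((n : ℕ) : ℝ)⁻¹) :=
  ciInf_le (coneSpecRad_bddBelow f W) n

lemma coneSpecRad_le_opNormW (f : X → X) (W : Set X) : coneSpecRad f W ≤ opNormW f W := by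
  simpa using coneSpecRad_le f W 1

lemma pow_coneSpecRad_le (f : X → X) (W : Set X) {k : ℕ} (hk : 0 < k) :
    (coneSpecRad f W) ^ k ≤ coneSpecRad (f^[k]) W := by
  apply le_ciInf
  intro n
  have hkn : 0 < k * (n : ℕ) := Nat.mul_pos hk n.2
  have h1 : coneSpecRad f W ≤ (opNormW (f^[k * (n : ℕ)]) W) ^ (((k * (n : ℕ) : ℕ) : ℝ)⁻¹) :=
    coneSpecRad_le f W ⟨k * (n : ℕ), hkn⟩
  have h2 := pow_le_pow_left₀ (coneSpecRad_nonneg f W) h1 k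
  rw [← Function.iterate_mul]
  refine h2.trans_eq ?_
  rw [← Real.rpow_natCast ((opNormW (f^[k * (n : ℕ)]) W) ^ (((k * (n : ℕ) : ℕ) : ℝ)⁻¹)) k,
    ← Real.rpow_mul (opNormW_nonneg _ _)]
  congr 1
  have hk' : ((k : ℝ)) ≠ 0 := Nat.cast_ne_zero.2 hk.ne'
  have hn' : (((n : ℕ) : ℝ)) ≠ 0 := Nat.cast_ne_zero.2 n.2.ne'
  push_cast
  field_simp

end Aux

theorem statement1 {X : Type*} [NormedAddCommGroup X] [NormedSpace ℝ X]
    (W : Set X) (hW : IsWedge W)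
    (A : Set (X → X)) (hA : ∀ f ∈ A, HomogOn f W)
    (hbdd : BoundedFamOn A W) :
    Filter.limsup (fun n : ℕ => genTerm A W n) atTop = genRad A W := by
  classical
  obtain ⟨C0, hC0⟩ := hbdd
  set C : ℝ := max C0 1 with hCdef
  have hC1 : (1 : ℝ) ≤ C := le_max_right _ _
  have hC0' : (0 : ℝ) ≤ C := zero_le_one.trans hC1
  have hCA : ∀ f ∈ A, ∀ x ∈ W, ‖f x‖ ≤ C * ‖x‖ := fun f hf x hx =>
    (hC0 f hf x hx).trans (mul_le_mul_of_nonneg_right (le_max_left _ _) (norm_nonneg _))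
  -- bound on famPow
  have hpow : ∀ m : ℕ, ∀ f ∈ famPow A m, Set.MapsTo f W W ∧ ∀ x ∈ W, ‖f x‖ ≤ C ^ m * ‖x‖ := by
    intro m
    induction m with
    | zero =>
      rintro f hf
      simp only [famPow, Set.mem_singleton_iff] at hf
      subst hf
      exact ⟨fun x hx => hx, fun x hx => by simp⟩
    | succ m ih =>
      rintro h ⟨f, hf, g, hg, rfl⟩
      obtain ⟨hgmap, hgbd⟩ := ih g hg
      refine ⟨((hA f hf).1.comp hgmap), fun x hx => ?_⟩
      calc ‖f (g x)‖ ≤ C * ‖g x‖ := hCA f hf _ (hgmap hx)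
        _ ≤ C * (C ^ m * ‖x‖) := mul_le_mul_of_nonneg_left (hgbd x hx) hC0'
        _ = C ^ (m + 1) * ‖x‖ := by ring
  have hop_le : ∀ m : ℕ, ∀ f ∈ famPow A m, opNormW f W ≤ C ^ m := fun m f hf =>
    opNormW_le (pow_nonneg hC0' m) (hpow m f hf).2
  -- composition closure
  have hcomp : ∀ a b : ℕ, ∀ f ∈ famPow A a, ∀ g ∈ famPow A b, f ∘ g ∈ famPow A (a + b) := by
    intro a
    induction a with
    | zero =>
      rintro b f hf g hg
      simp only [famPow, Set.mem_singleton_iff] at hf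
      subst hf
      simpa using hg
    | succ a ih =>
      rintro b h ⟨f, hf, g, hg, rfl⟩ g' hg'
      have : (a + 1) + b = (a + b) + 1 := by omega
      rw [this]
      exact ⟨f, hf, g ∘ g', ih b g hg g' hg', rfl⟩
  have hiter : ∀ (k m : ℕ), ∀ f ∈ famPow A m, f^[k] ∈ famPow A (k * m) := by
    intro k
    induction k with
    | zero => intro m f hf; simp [famPow]
    | succ k ih =>
      intro m f hf
      have : (k + 1) * m = m + k * m := by ring
      rw [this, Function.iterate_succ']
      exact hcomp m (k * m) f hf _ (ih m f hf)
  -- bound and nonneg on genTerm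
  have hterm_nonneg : ∀ m : ℕ, 0 ≤ genTerm A W m := fun m =>
    Real.sSup_nonneg (by rintro y ⟨f, _, rfl⟩; exact Real.rpow_nonneg (coneSpecRad_nonneg f W) _)
  have hterm_le : ∀ m : ℕ, genTerm A W m ≤ C := by
    intro m
    apply Real.sSup_le _ hC0'
    rintro y ⟨f, hf, rfl⟩
    have h1 : coneSpecRad f W ≤ C ^ m := (coneSpecRad_le_opNormW f W).trans (hop_le m f hf)
    have h2 : (coneSpecRad f W) ^ ((m : ℝ)⁻¹) ≤ (C ^ m) ^ ((m : ℝ)⁻¹) :=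
      Real.rpow_le_rpow (coneSpecRad_nonneg f W) h1 (by positivity)
    refine h2.trans ?_
    rcases Nat.eq_zero_or_pos m with rfl | hm
    · simpa using hC1
    · rw [← Real.rpow_natCast C m, ← Real.rpow_mul hC0']
      rw [mul_inv_cancel₀ (Nat.cast_ne_zero.2 hm.ne' : ((m : ℕ) : ℝ) ≠ 0), Real.rpow_one]
  have hbddAbove : ∀ m : ℕ, BddAbove ((fun f => (coneSpecRad f W) ^ ((m : ℝ)⁻¹)) '' famPow A m) := by
    intro m
    refine ⟨C, ?_⟩
    rintro y ⟨f, hf, rfl⟩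
    have h1 : coneSpecRad f W ≤ C ^ m := (coneSpecRad_le_opNormW f W).trans (hop_le m f hf)
    have h2 : (coneSpecRad f W) ^ ((m : ℝ)⁻¹) ≤ (C ^ m) ^ ((m : ℝ)⁻¹) :=
      Real.rpow_le_rpow (coneSpecRad_nonneg f W) h1 (by positivity)
    refine h2.trans ?_
    rcases Nat.eq_zero_or_pos m with rfl | hm
    · simpa using hC1
    · rw [← Real.rpow_natCast C m, ← Real.rpow_mul hC0']
      rw [mul_inv_cancel₀ (Nat.cast_ne_zero.2 hm.ne' : ((m : ℕ) : ℝ) ≠ 0), Real.rpow_one]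
  -- key monotonicity along multiples
  have hkey : ∀ m k : ℕ, 0 < m → 0 < k → genTerm A W m ≤ genTerm A W (k * m) := by
    intro m k hm hk
    apply Real.sSup_le _ (hterm_nonneg _)
    rintro y ⟨f, hf, rfl⟩
    have hmem : f^[k] ∈ famPow A (k * m) := hiter k m f hf
    have h1 : (coneSpecRad f W) ^ ((m : ℝ)⁻¹) ≤ (coneSpecRad (f^[k]) W) ^ (((k * m : ℕ) : ℝ)⁻¹) := by
      have h2 : ((coneSpecRad f W) ^ k) ^ (((k * m : ℕ) : ℝ)⁻¹) ≤
          (coneSpecRad (f^[k]) W) ^ (((k * m : ℕ) : ℝ)⁻¹) :=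
        Real.rpow_le_rpow (pow_nonneg (coneSpecRad_nonneg f W) k)
          (pow_coneSpecRad_le f W hk) (by positivity)
      refine le_trans ?_ h2
      rw [← Real.rpow_natCast (coneSpecRad f W) k, ← Real.rpow_mul (coneSpecRad_nonneg f W)]
      apply le_of_eq
      congr 1
      have hk' : ((k : ℝ)) ≠ 0 := Nat.cast_ne_zero.2 hk.ne'
      have hm' : ((m : ℝ)) ≠ 0 := Nat.cast_ne_zero.2 hm.ne'
      push_cast
      field_simp
    exact h1.trans (le_csSup (hbddAbove (k * m)) ⟨f^[k], hmem, rfl⟩)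
  -- limsup = sup
  set u : ℕ → ℝ := fun n => genTerm A W n with hu
  have hBddAboveRange : BddAbove (Set.range fun m : ℕ+ => u (m : ℕ)) :=
    ⟨C, by rintro _ ⟨m, rfl⟩; exact hterm_le _⟩
  have hbdd_le : IsBoundedUnder (· ≤ ·) atTop u := isBoundedUnder_of ⟨C, fun n => hterm_le n⟩
  have hcob : IsCoboundedUnder (· ≤ ·) atTop u :=
    isCoboundedUnder_le_of_le atTop fun n => hterm_nonneg n
  apply le_antisymm
  · apply limsup_le_of_le hcob
    filter_upwards [eventually_ge_atTop 1] with n hn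
    exact le_ciSup hBddAboveRange (⟨n, hn⟩ : ℕ+)
  · apply ciSup_le
    intro m
    apply le_limsup_of_frequently_le _ hbdd_le
    rw [frequently_atTop]
    intro N
    refine ⟨(max N 1) * (m : ℕ), ?_, ?_⟩
    · calc N ≤ max N 1 := le_max_left _ _
        _ ≤ (max N 1) * (m : ℕ) := Nat.le_mul_of_pos_right _ m.2
    · exact hkey (m : ℕ) (max N 1) m.2 (lt_of_lt_of_le one_pos (le_max_right _ _))
end
end

section
/- Let K be a closed cone in a finite dimensional normed space X and let 𝒜, ℬ be bounded, (pointwise) equicontinuous families of homogeneous maps from K to K. Then the family of compositions 𝒜ℬ = {f ∘ g : f ∈ 𝒜, g ∈ ℬ} is equicontinuous on K. -/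
open Filter Topology Set

noncomputable section

/-- Pointwise equicontinuity on a compact set gives a uniform modulus. -/
lemma aux_unif {X Y ι : Type*} [PseudoMetricSpace X] [PseudoMetricSpace Y] {F : ι → X → Y}
    {S : Set X} (hS : IsCompact S) (hF : EquicontinuousOn F S) {ε : ℝ} (hε : 0 < ε) :
    ∃ δ > 0, ∀ u ∈ S, ∀ v ∈ S, dist u v < δ → ∀ i, dist (F i u) (F i v) < ε := by
  have key : ∀ u ∈ S, ∃ δ > 0, ∀ v ∈ S, dist v u < δ → ∀ i, dist (F i u) (F i v) < ε / 2 := by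
    intro u hu
    have hU : {p : Y × Y | dist p.1 p.2 < ε / 2} ∈ uniformity Y :=
      Metric.dist_mem_uniformity (by linarith)
    have h := hF u hu _ hU
    rw [eventually_iff, Metric.mem_nhdsWithin_iff] at h
    obtain ⟨δ, hδ, hδ'⟩ := h
    exact ⟨δ, hδ, fun v hv hvu i => hδ' ⟨Metric.mem_ball.2 hvu, hv⟩ i⟩
  choose! δ hδpos hδ using key
  rcases S.eq_empty_or_nonempty with rfl | hSne
  · exact ⟨1, one_pos, fun u hu => absurd hu (notMem_empty u)⟩
  obtain ⟨t, hts, htfin, htcov⟩ := hS.elim_finite_subcover_image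
    (fun u hu => Metric.isOpen_ball (x := u) (ε := δ u / 2))
    (fun z hz => mem_iUnion₂.2 ⟨z, hz, by
      simpa using half_pos (hδpos z hz)⟩)
  lift t to Finset X using htfin
  rcases t.eq_empty_or_nonempty with rfl | htne
  · obtain ⟨z, hz⟩ := hSne
    simpa using htcov hz
  refine ⟨t.inf' htne (fun u => δ u / 2), ?_, ?_⟩
  · exact (Finset.lt_inf'_iff _).2 fun u hu => half_pos (hδpos u (hts hu))
  · intro u hu v hv huv i
    obtain ⟨w, hw, hw'⟩ := mem_iUnion₂.1 (htcov hu)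
    have hwS : w ∈ S := hts hw
    have huw : dist u w < δ w / 2 := Metric.mem_ball.1 hw'
    have h1 : dist (F i w) (F i u) < ε / 2 :=
      hδ w hwS u hu (by linarith [dist_comm u w ▸ huw, half_le_self (le_of_lt (hδpos w hwS))]) i
    have hvw : dist v w < δ w := by
      have := dist_triangle v u w
      have hlt : dist u v < δ w / 2 := lt_of_lt_of_le huv (Finset.inf'_le _ hw)
      have := dist_comm u v
      linarith [dist_triangle v u w, dist_comm v u]
    have h2 : dist (F i w) (F i v) < ε / 2 := hδ w hwS v hv hvw i
    calc dist (F i u) (F i v) ≤ dist (F i u) (F i w) + dist (F i w) (F i v) := dist_triangle _ _ _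
      _ < ε / 2 + ε / 2 := by rw [dist_comm (F i u)]; exact add_lt_add h1 h2
      _ = ε := add_halves ε


theorem statement4 {X : Type*} [NormedAddCommGroup X] [NormedSpace ℝ X]
    [FiniteDimensional ℝ X]
    (K : Set X) (hK : IsClosedCone K)
    (A B : Set (X → X))
    (hA : ∀ f ∈ A, HomogOn f K) (hB : ∀ g ∈ B, HomogOn g K)
    (hAbdd : BoundedFamOn A K) (hBbdd : BoundedFamOn B K)
    (hAeq : EquicontinuousOn (fun f : A => (f : X → X)) K)
    (hBeq : EquicontinuousOn (fun g : B => (g : X → X)) K) :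
    EquicontinuousOn (fun h : compFam A B => (h : X → X)) K := by
  intro x hx U hU
  rw [Metric.mem_uniformity_dist] at hU
  obtain ⟨ε, hε, hUε⟩ := hU
  obtain ⟨C, hC⟩ := hBbdd
  set C' : ℝ := max C 0 with hC'def
  set R : ℝ := C' * (‖x‖ + 1) with hRdef
  set S : Set X := K ∩ Metric.closedBall 0 R with hSdef
  have hScomp : IsCompact S :=
    (isCompact_closedBall (0 : X) R).of_isClosed_subset
      (hK.1.inter Metric.isClosed_closedBall) inter_subset_right
  obtain ⟨δ', hδ'pos, hδ'⟩ := aux_unif hScomp (hAeq.mono inter_subset_left) hε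
  have h1 : ∀ᶠ y in nhdsWithin x K, ∀ g : B, dist ((g : X → X) x) ((g : X → X) y) < δ' := by
    simpa using hBeq x hx _ (Metric.dist_mem_uniformity hδ'pos)
  have h2 : ∀ᶠ y in nhdsWithin x K, ‖y‖ ≤ ‖x‖ + 1 := by
    refine Filter.Eventually.filter_mono nhdsWithin_le_nhds ?_
    filter_upwards [Metric.ball_mem_nhds x one_pos] with y hy
    have h3 : dist y x < 1 := Metric.mem_ball.1 hy
    have h4 : ‖y‖ - ‖x‖ ≤ ‖y - x‖ := norm_sub_norm_le y x
    rw [dist_eq_norm] at h3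
    linarith
  filter_upwards [h1, h2, eventually_mem_nhdsWithin] with y hy1 hy2 hyK
  rintro ⟨h, f, hf, g, hg, rfl⟩
  have hgx : g x ∈ S := by
    refine ⟨(hB g hg).1 hx, Metric.mem_closedBall.2 ?_⟩
    rw [dist_zero_right]
    have := hC g hg x hx
    have h5 : C ≤ C' := le_max_left C 0
    nlinarith [norm_nonneg x, le_max_right C (0:ℝ)]
  have hgy : g y ∈ S := by
    refine ⟨(hB g hg).1 hyK, Metric.mem_closedBall.2 ?_⟩
    rw [dist_zero_right]
    have := hC g hg y hyK
    have h5 : C ≤ C' := le_max_left C 0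
    nlinarith [norm_nonneg y, le_max_right C (0:ℝ)]
  exact hUε (hδ' (g x) hgx (g y) hgy (hy1 ⟨g, hg⟩) ⟨f, hf⟩)
end
end

section
/- Let K be a closed polyhedral cone in a finite dimensional normed space. If 𝒜 is a bounded family of subadditive, order-preserving, homogeneous maps f: K → K, then 𝒜 is (pointwise) equicontinuous on K. In particular, any single bounded, subadditive, order-preserving, homogeneous map on a closed polyhedral cone is continuous. -/
open Filter Topology Set

noncomputable section

/-- Condition G for polyhedral cones. -/
lemma condG {X : Type*} [NormedAddCommGroup X] [NormedSpace ℝ X] [FiniteDimensional ℝ X]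
    {k : ℕ} (φ : Fin k → (X →ₗ[ℝ] ℝ)) (x : X) (γ : ℝ) (hγ : 0 < γ) :
    ∃ δ > 0, ∀ y, (∀ i, 0 ≤ φ i y) → ‖y - x‖ < δ → ∀ i, φ i x ≤ (1 + γ) * φ i y := by
  have hev : ∀ᶠ y in 𝓝 x, ∀ i, (0 ≤ φ i y → φ i x ≤ (1 + γ) * φ i y) := by
    rw [eventually_all]
    intro i
    rcases le_or_gt (φ i x) 0 with h | h
    · filter_upwards with y hy
      have : (0:ℝ) ≤ (1 + γ) * φ i y := by positivity
      linarith
    · have hcont : Continuous fun y => (1 + γ) * φ i y :=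
        continuous_const.mul (LinearMap.continuous_of_finiteDimensional (φ i))
      have hlt : φ i x < (1 + γ) * φ i x := by nlinarith
      have := (hcont.continuousAt (x := x)).eventually (eventually_gt_nhds hlt)
      filter_upwards [this] with y hy _
      exact hy.le
  rcases Metric.eventually_nhds_iff.1 hev with ⟨δ, hδ, h⟩
  refine ⟨δ, hδ, fun y hy hclose i => ?_⟩
  have : dist y x < δ := by rwa [dist_eq_norm]
  exact h this i (hy i)

/-- Normality of a closed polyhedral cone. -/
lemma normality {X : Type*} [NormedAddCommGroup X] [NormedSpace ℝ X] [FiniteDimensional ℝ X]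
    (K : Set X) (hK : IsClosedCone K)
    {k : ℕ} (φ : Fin k → (X →ₗ[ℝ] ℝ)) (hKeq : K = {x | ∀ i, 0 ≤ φ i x}) :
    ∃ M > 0, ∀ v w : X, v ∈ K → w - v ∈ K → ‖v‖ ≤ M * ‖w‖ := by
  by_cases htriv : ∀ v ∈ K, v = (0:X)
  · refine ⟨1, one_pos, fun v w hv _ => ?_⟩
    rw [htriv v hv]
    simp [norm_nonneg]
  · push_neg at htriv
    obtain ⟨v₀, hv₀K, hv₀⟩ := htriv
    set ψ : X →ₗ[ℝ] ℝ := ∑ i, φ i with hψ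
    have hψapp : ∀ z, ψ z = ∑ i, φ i z := by
      intro z; simp [hψ, LinearMap.sum_apply]
    have hψnonneg : ∀ z ∈ K, 0 ≤ ψ z := by
      intro z hz
      rw [hKeq] at hz
      rw [hψapp]
      exact Finset.sum_nonneg fun i _ => hz i
    set ψc : X →L[ℝ] ℝ := LinearMap.toContinuousLinearMap ψ with hψc
    -- the set S = K ∩ sphere
    set S : Set X := K ∩ Metric.sphere 0 1 with hS
    have hScompact : IsCompact S := ((isCompact_sphere (0:X) 1).inter_left hK.1)
    have hSne : S.Nonempty := by
      refine ⟨‖v₀‖⁻¹ • v₀, hK.2.2.1 _ (inv_pos.2 (norm_pos_iff.2 hv₀)) _ hv₀K, ?_⟩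
      simp only [mem_sphere_iff_norm, sub_zero, norm_smul, norm_inv, norm_norm]
      field_simp
    obtain ⟨u, huS, hmin⟩ := hScompact.exists_isMinOn hSne
      (ψc.continuous.continuousOn)
    have huK : u ∈ K := huS.1
    have hunorm : ‖u‖ = 1 := by simpa using huS.2
    have hm : 0 < ψ u := by
      rcases lt_or_ge 0 (ψ u) with h | h
      · exact h
      · exfalso
        have hall : ∀ i, φ i u = 0 := by
          have h0 : ∑ i, φ i u = 0 := by
            have h1 := hψnonneg u huK
            rw [hψapp] at h h1; linarith
          intro i
          have hK' := (hKeq ▸ huK)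
          exact (Finset.sum_eq_zero_iff_of_nonneg (fun i _ => hK' i)).1 h0 i (Finset.mem_univ i)
        have hneg : -u ∈ K := by
          rw [hKeq]; intro i; simp [hall i]
        have : u ∈ K ∩ (-K) := ⟨huK, by simpa using hneg⟩
        rw [hK.2.2.2] at this
        simp only [Set.mem_singleton_iff] at this
        rw [this] at hunorm; simp at hunorm
    have hlower : ∀ v ∈ K, ψ u * ‖v‖ ≤ ψ v := by
      intro v hv
      rcases eq_or_ne v 0 with rfl | hvne
      · simp
      · have hposn : (0:ℝ) < ‖v‖ := norm_pos_iff.2 hvne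
        have hvunit : ‖v‖⁻¹ • v ∈ S := by
          refine ⟨hK.2.2.1 _ (inv_pos.2 hposn) _ hv, ?_⟩
          simp only [mem_sphere_iff_norm, sub_zero, norm_smul, norm_inv, norm_norm]
          field_simp
        have := hmin hvunit
        have h2 : ψ u ≤ ψ (‖v‖⁻¹ • v) := this
        have h3 : ψ (‖v‖⁻¹ • v) = ‖v‖⁻¹ * ψ v := by rw [map_smul]; simp
        rw [h3] at h2
        calc ψ u * ‖v‖ ≤ (‖v‖⁻¹ * ψ v) * ‖v‖ := by nlinarith
          _ = ψ v := by field_simp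
    refine ⟨‖ψc‖ / ψ u + 1, by positivity, fun v w hv hwv => ?_⟩
    have h1 : ψ u * ‖v‖ ≤ ψ v := hlower v hv
    have h2 : ψ v ≤ ψ w := by
      have := hψnonneg _ hwv
      have : ψ (w - v) = ψ w - ψ v := by rw [map_sub]
      have h3 := hψnonneg _ hwv
      rw [this] at h3; linarith
    have h4 : ψ w ≤ ‖ψc‖ * ‖w‖ := by
      have := ψc.le_opNorm w
      have hc : ψc w = ψ w := by simp [hψc]
      rw [hc] at this
      calc ψ w ≤ |ψ w| := le_abs_self _
        _ = ‖ψ w‖ := (Real.norm_eq_abs _).symm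
        _ ≤ ‖ψc‖ * ‖w‖ := by rw [← hc] at *; exact this
    have h5 : ψ u * ‖v‖ ≤ ‖ψc‖ * ‖w‖ := by linarith
    have h6 : ‖v‖ ≤ ‖ψc‖ / ψ u * ‖w‖ := by
      rw [div_mul_eq_mul_div, le_div_iff₀ hm]
      linarith [h5, mul_comm ‖v‖ (ψ u)]
    calc ‖v‖ ≤ ‖ψc‖ / ψ u * ‖w‖ := h6
      _ ≤ (‖ψc‖ / ψ u + 1) * ‖w‖ := by nlinarith [norm_nonneg w]

/-- The key uniform estimate. -/
lemma keylem {X : Type*} [NormedAddCommGroup X] [NormedSpace ℝ X] [FiniteDimensional ℝ X]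
    (K : Set X) (hK : IsClosedCone K) (hpoly : IsPolyhedralCone K)
    (C : ℝ) (hC : 0 ≤ C) (x : X) (hx : x ∈ K) (ε : ℝ) (hε : 0 < ε) :
    ∃ δ > 0, ∀ f : X → X, HomogOn f K → OrderPresOn f K → SubaddOn f K →
      (∀ z ∈ K, ‖f z‖ ≤ C * ‖z‖) →
      ∀ y ∈ K, ‖y - x‖ < δ → ‖f y - f x‖ < ε := by
  obtain ⟨k, φ, hKeq⟩ := hpoly
  obtain ⟨M, hM, hnorm⟩ := normality K hK φ hKeq
  set P : ℝ := M * C with hP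
  have hPnn : 0 ≤ P := mul_nonneg hM.le hC
  set B : ℝ := P * ‖x‖ + C * ‖x‖ with hB
  have hBnn : 0 ≤ B := by positivity
  set γ : ℝ := ε / (2 * (B + 1)) with hγdef
  have hγ : 0 < γ := by positivity
  have hγB : (B + 1) * γ = ε / 2 := by
    rw [hγdef]; field_simp
  set δ' : ℝ := ε / (2 * (P + 1)) with hδ'def
  have hδ' : 0 < δ' := by positivity
  have hPδ : (P + 1) * δ' = ε / 2 := by
    rw [hδ'def]; field_simp
  obtain ⟨δ₀, hδ₀, hG⟩ := condG φ x γ hγ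
  refine ⟨min δ₀ δ', lt_min hδ₀ hδ', fun f hf hord hsub hbound y hy hclose => ?_⟩
  have hclose₀ : ‖y - x‖ < δ₀ := lt_of_lt_of_le hclose (min_le_left _ _)
  have hclose' : ‖y - x‖ < δ' := lt_of_lt_of_le hclose (min_le_right _ _)
  have hyK' : ∀ i, 0 ≤ φ i y := by rw [hKeq] at hy; exact hy
  have hGx := hG y hyK' hclose₀
  set c : ℝ := (1 + γ)⁻¹ with hcdef
  have h1γ : (0:ℝ) < 1 + γ := by linarith
  have hcpos : 0 < c := by positivity
  have hcc : c * (1 + γ) = 1 := inv_mul_cancel₀ h1γ.ne'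
  have hcle1 : c ≤ 1 := by
    rw [hcdef]; rw [inv_le_one_iff₀]; right; linarith
  have h1mc : 1 - c ≤ γ := by nlinarith
  have h1mcnn : 0 ≤ 1 - c := by linarith
  set z : X := y - c • x with hz
  have hzK : z ∈ K := by
    rw [hKeq]
    intro i
    have hφz : φ i z = φ i y - c * φ i x := by
      rw [hz, map_sub, map_smul, smul_eq_mul]
    have h2 := mul_le_mul_of_nonneg_left (hGx i) hcpos.le
    have h3 : c * ((1 + γ) * φ i y) = φ i y := by rw [← mul_assoc, hcc, one_mul]
    rw [h3] at h2
    linarith [hφz ▸ sub_nonneg.2 h2]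
  have hcxK : c • x ∈ K := hK.2.2.1 c hcpos x hx
  have hfcx : f (c • x) = c • f x := hf.2 c hcpos x hx
  -- upper bound
  have hup : (c • f x + f z) - f y ∈ K := by
    have h := hsub (c • x) hcxK z hzK
    have hsum : c • x + z = y := by rw [hz]; abel
    rw [hsum, hfcx] at h
    exact h
  -- lower bound
  have hlow : f y - c • f x ∈ K := by
    have h := hord (c • x) hcxK y hy (by rw [hz] at hzK; exact hzK)
    rwa [hfcx] at h
  -- normality
  have hwv : f z - (f y - c • f x) ∈ K := by
    have heq : f z - (f y - c • f x) = (c • f x + f z) - f y := by abel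
    rw [heq]; exact hup
  have hnv : ‖f y - c • f x‖ ≤ M * ‖f z‖ := hnorm _ _ hlow hwv
  have hfz : ‖f z‖ ≤ C * ‖z‖ := hbound z hzK
  have hfx : ‖f x‖ ≤ C * ‖x‖ := hbound x hx
  have hzb : ‖z‖ ≤ ‖y - x‖ + (1 - c) * ‖x‖ := by
    have heq : z = (y - x) + (1 - c) • x := by rw [hz, sub_smul, one_smul]; abel
    calc ‖z‖ = ‖(y - x) + (1 - c) • x‖ := by rw [← heq]
      _ ≤ ‖y - x‖ + ‖(1 - c) • x‖ := norm_add_le _ _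
      _ = ‖y - x‖ + (1 - c) * ‖x‖ := by
          rw [norm_smul, Real.norm_eq_abs, abs_of_nonneg h1mcnn]
  have hsplit : ‖f y - f x‖ ≤ ‖f y - c • f x‖ + (1 - c) * ‖f x‖ := by
    have heq : f y - f x = (f y - c • f x) - ((1 - c) • f x) := by
      rw [sub_smul, one_smul]; abel
    calc ‖f y - f x‖ = ‖(f y - c • f x) - ((1 - c) • f x)‖ := by rw [← heq]
      _ ≤ ‖f y - c • f x‖ + ‖(1 - c) • f x‖ := norm_sub_le _ _
      _ = ‖f y - c • f x‖ + (1 - c) * ‖f x‖ := by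
          rw [norm_smul, Real.norm_eq_abs, abs_of_nonneg h1mcnn]
  -- combine
  have e1 : M * ‖f z‖ ≤ P * ‖z‖ := by rw [hP, mul_assoc]; exact mul_le_mul_of_nonneg_left hfz hM.le
  have e2 : P * ‖z‖ ≤ P * (‖y - x‖ + γ * ‖x‖) := by
    apply mul_le_mul_of_nonneg_left _ hPnn
    have := mul_le_mul_of_nonneg_right h1mc (norm_nonneg x)
    linarith
  have e3 : (1 - c) * ‖f x‖ ≤ γ * (C * ‖x‖) := by
    apply mul_le_mul h1mc hfx (norm_nonneg _) hγ.le
  have e4 : ‖f y - f x‖ ≤ P * ‖y - x‖ + γ * B := by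
    have : P * (‖y - x‖ + γ * ‖x‖) = P * ‖y - x‖ + γ * (P * ‖x‖) := by ring
    rw [hB]; nlinarith
  have e5 : P * ‖y - x‖ ≤ P * δ' := mul_le_mul_of_nonneg_left hclose'.le hPnn
  have e6 : P * δ' < ε / 2 := by
    have hr : (P + 1) * δ' = P * δ' + δ' := by ring
    linarith
  have e7 : γ * B < ε / 2 := by
    have hr : (B + 1) * γ = B * γ + γ := by ring
    have hr2 : B * γ = γ * B := mul_comm _ _
    linarith
  linarith

theorem statement6' {X : Type*} [NormedAddCommGroup X] [NormedSpace ℝ X]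
    [FiniteDimensional ℝ X]
    (K : Set X) (hK : IsClosedCone K) (hpoly : IsPolyhedralCone K)
    (A : Set (X → X))
    (hA : ∀ f ∈ A, HomogOn f K ∧ OrderPresOn f K ∧ SubaddOn f K)
    (hbdd : BoundedFamOn A K) :
    EquicontinuousOn (fun f : A => (f : X → X)) K ∧
      ∀ f : X → X, HomogOn f K → OrderPresOn f K → SubaddOn f K → BoundedMapOn f K →
        ContinuousOn f K := by
  constructor
  · obtain ⟨C, hC⟩ := hbdd
    intro x hx U hU
    obtain ⟨ε, hε, hU'⟩ := Metric.mem_uniformity_dist.1 hU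
    obtain ⟨δ, hδ, hkey⟩ := keylem K hK hpoly (max C 0) (le_max_right _ _) x hx ε hε
    have hmem : K ∩ Metric.ball x δ ∈ 𝓝[K] x :=
      inter_mem_nhdsWithin _ (Metric.ball_mem_nhds x hδ)
    filter_upwards [hmem] with y hy
    rintro ⟨f, hfA⟩
    obtain ⟨hfh, hfo, hfs⟩ := hA f hfA
    have hb : ∀ z ∈ K, ‖f z‖ ≤ (max C 0) * ‖z‖ := fun z hz =>
      le_trans (hC f hfA z hz) (mul_le_mul_of_nonneg_right (le_max_left _ _) (norm_nonneg _))
    apply hU'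
    have : ‖y - x‖ < δ := by
      have := hy.2
      rwa [Metric.mem_ball, dist_eq_norm] at this
    have h := hkey f hfh hfo hfs hb y hy.1 this
    rwa [dist_eq_norm, norm_sub_rev]
  · intro f hfh hfo hfs ⟨C, hC⟩ x hx
    rw [Metric.continuousWithinAt_iff]
    intro ε hε
    obtain ⟨δ, hδ, hkey⟩ := keylem K hK hpoly (max C 0) (le_max_right _ _) x hx ε hε
    refine ⟨δ, hδ, fun y hy hyd => ?_⟩
    have hb : ∀ z ∈ K, ‖f z‖ ≤ (max C 0) * ‖z‖ := fun z hz =>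
      le_trans (hC z hz) (mul_le_mul_of_nonneg_right (le_max_left _ _) (norm_nonneg _))
    have : ‖y - x‖ < δ := by rwa [dist_eq_norm] at hyd
    have h := hkey f hfh hfo hfs hb y hy this
    rwa [dist_eq_norm]

theorem statement6 {X : Type*} [NormedAddCommGroup X] [NormedSpace ℝ X]
    [FiniteDimensional ℝ X]
    (K : Set X) (hK : IsClosedCone K) (hpoly : IsPolyhedralCone K)
    (A : Set (X → X))
    (hA : ∀ f ∈ A, HomogOn f K ∧ OrderPresOn f K ∧ SubaddOn f K)
    (hbdd : BoundedFamOn A K) :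
    EquicontinuousOn (fun f : A => (f : X → X)) K ∧
      ∀ f : X → X, HomogOn f K → OrderPresOn f K → SubaddOn f K → BoundedMapOn f K →
        ContinuousOn f K :=
  statement6' K hK hpoly A hA hbdd
end
end

section
/- There exists a bounded family 𝒜 of continuous, order-preserving, homogeneous maps on ℝ²_{≥0} that is not equicontinuous. Specifically, for 𝒜 = {f_k : k > 0} with f_k(x) = (min{x₂, k x₁}, x₂), the family is bounded but not equicontinuous at the point e₂ = (0,1). -/
open Filter Topology Set

noncomputable section

/-- The maps f_k(x) = (min{x₂, k x₁}, x₂) on ℝ²_{≥0}. -/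
def fEx (k : ℝ) : (Fin 2 → ℝ) → Fin 2 → ℝ := fun x => ![min (x 1) (k * x 0), x 1]

theorem statement7 :
    (∀ k : ℝ, 0 < k →
      ContinuousOn (fEx k) (stdCone 2) ∧ HomogOn (fEx k) (stdCone 2) ∧
        OrderPresOn (fEx k) (stdCone 2)) ∧
    BoundedFamOn {g | ∃ k : ℝ, 0 < k ∧ g = fEx k} (stdCone 2) ∧
    ¬ EquicontinuousWithinAt
        (fun g : {g | ∃ k : ℝ, 0 < k ∧ g = fEx k} => (g : (Fin 2 → ℝ) → Fin 2 → ℝ))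
        (stdCone 2) ![0, 1] := by
  
  refine ⟨fun k hk => ⟨?_, ⟨?_, ?_⟩, ?_⟩, ⟨1, ?_⟩, ?_⟩
  · -- continuity
    apply Continuous.continuousOn
    apply continuous_pi
    intro i
    fin_cases i <;> simp [fEx] <;> fun_prop
  · -- MapsTo
    intro x hx i
    fin_cases i
    · simpa [fEx] using ⟨hx 1, mul_nonneg hk.le (hx 0)⟩
    · simpa [fEx] using hx 1
  · -- homogeneous
    intro c hc x hx
    funext i
    fin_cases i <;>
      simp [fEx, Pi.smul_apply, smul_eq_mul, mul_min_of_nonneg _ _ hc.le, mul_left_comm]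
  · -- order preserving
    intro x hx y hy hxy i
    have h0 : x 0 ≤ y 0 := by have := hxy 0; simpa [sub_nonneg] using this
    have h1 : x 1 ≤ y 1 := by have := hxy 1; simpa [sub_nonneg] using this
    fin_cases i
    · simpa [fEx, sub_nonneg] using min_le_min h1 (mul_le_mul_of_nonneg_left h0 hk.le)
    · simpa [fEx, sub_nonneg] using h1
  · -- bounded
    rintro g ⟨k, hk, rfl⟩ x hx
    rw [one_mul]
    rw [pi_norm_le_iff_of_nonneg (norm_nonneg x)]
    intro i
    have hb : |x 1| ≤ ‖x‖ := norm_le_pi_norm x 1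
    fin_cases i
    · show ‖x 1 ⊓ k * x 0‖ ≤ ‖x‖
      rw [Real.norm_eq_abs, abs_of_nonneg (le_min (hx 1) (mul_nonneg hk.le (hx 0)))]
      exact (min_le_left _ _).trans ((le_abs_self _).trans hb)
    · simpa [fEx] using hb
  · -- not equicontinuous
    intro h
    have h2 := h _ (Metric.dist_mem_uniformity (by norm_num : (0:ℝ) < 1/2))
    rw [Filter.Eventually, Metric.mem_nhdsWithin_iff] at h2
    obtain ⟨δ, hδ, hball⟩ := h2
    set x : Fin 2 → ℝ := ![δ/2, 1] with hxdef
    have hxball : x ∈ Metric.ball (![0,1] : Fin 2 → ℝ) δ := by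
      rw [Metric.mem_ball, dist_pi_lt_iff hδ]
      intro i
      fin_cases i <;> simp [hxdef, Real.dist_eq, abs_of_nonneg hδ.le] <;> linarith
    have hxcone : x ∈ stdCone 2 := by
      intro i; fin_cases i <;> simp [hxdef] <;> linarith
    have hg : fEx (4/δ) ∈ {g | ∃ k : ℝ, 0 < k ∧ g = fEx k} := ⟨4/δ, by positivity, rfl⟩
    have := hball ⟨hxball, hxcone⟩ ⟨fEx (4/δ), hg⟩
    simp only [Set.mem_setOf_eq] at this
    have hval : fEx (4/δ) x = ![1, 1] := by
      funext i
      fin_cases i <;> simp [fEx, hxdef]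
      rw [div_mul_eq_mul_div, le_div_iff₀ hδ]
      linarith
    have hval0 : fEx (4/δ) ![0,1] = ![0,1] := by
      funext i
      fin_cases i <;> simp [fEx]
    rw [hval, hval0] at this
    have hd : dist ((![0,1] : Fin 2 → ℝ) 0) ((![1,1] : Fin 2 → ℝ) 0) ≤ dist (![0,1] : Fin 2 → ℝ) ![1,1] :=
      dist_le_pi_dist _ _ 0
    simp [Real.dist_eq] at hd
    linarith
end
end

section
/- Let 𝒜 be a family of subadditive, order-preserving, homogeneous maps on ℝⁿ_{≥0}. Then 𝒜 is irreducible (no non-trivial closed face of ℝⁿ_{≥0} is invariant under all f ∈ 𝒜) if and only if for every pair of distinct indices i, j ∈ [n] there exist m ∈ ℕ and f ∈ 𝒜^m such that f(e_j)_i > 0. -/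
open Filter Topology Set

noncomputable section

lemma aux_homog_zero {n : ℕ} {f : (Fin n → ℝ) → Fin n → ℝ} (h : HomogOn f (stdCone n)) :
    f 0 = 0 := by
  have h0 : (0 : Fin n → ℝ) ∈ stdCone n := fun i => le_refl 0
  have h2 := h.2 2 (by norm_num) 0 h0
  rw [smul_zero] at h2
  funext i
  have := congrFun h2 i
  simp only [Pi.smul_apply, smul_eq_mul] at this
  simpa using by linarith

lemma aux_famPow_mapsTo {n : ℕ} {A : Set ((Fin n → ℝ) → Fin n → ℝ)} {P : Set (Fin n → ℝ)}
    (h : ∀ f ∈ A, Set.MapsTo f P P) : ∀ m, ∀ g ∈ famPow A m, Set.MapsTo g P P := by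
  intro m
  induction m with
  | zero =>
    intro g hg
    simp only [famPow, Set.mem_singleton_iff] at hg
    subst hg; exact Set.mapsTo_id P
  | succ m ih =>
    rintro g ⟨f, hf, g', hg', rfl⟩
    exact (h f hf).comp (ih g' hg')

lemma aux_subadd_sum {n : ℕ} {f : (Fin n → ℝ) → Fin n → ℝ}
    (hs : SubaddOn f (stdCone n)) (h0 : f 0 = 0)
    {ι : Type*} (s : Finset ι) (v : ι → Fin n → ℝ) (hv : ∀ k ∈ s, v k ∈ stdCone n) :
    ∀ i, f (∑ k ∈ s, v k) i ≤ ∑ k ∈ s, f (v k) i := by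
  classical
  induction s using Finset.induction_on with
  | empty => intro i; simp [h0]
  | @insert a s ha ih =>
    intro i
    rw [Finset.sum_insert ha, Finset.sum_insert ha]
    have hsum : (∑ k ∈ s, v k) ∈ stdCone n := fun t => by
      simpa using Finset.sum_nonneg (fun k hk => hv k (Finset.mem_insert_of_mem hk) t)
    have h1 := hs (v a) (hv a (Finset.mem_insert_self a s)) (∑ k ∈ s, v k) hsum i
    simp only [Pi.sub_apply, Pi.add_apply] at h1
    have h2 := ih (fun k hk => hv k (Finset.mem_insert_of_mem hk)) i
    linarith

theorem statement9 {n : ℕ} (A : Set ((Fin n → ℝ) → Fin n → ℝ))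
    (hA : ∀ f ∈ A, HomogOn f (stdCone n) ∧ OrderPresOn f (stdCone n) ∧
      SubaddOn f (stdCone n)) :
    IrreducibleFam A ↔
      ∀ i j : Fin n, i ≠ j →
        ∃ m : ℕ, 0 < m ∧ ∃ f ∈ famPow A m, 0 < f (Pi.single j 1) i := by
  classical
  have hconeMapsTo : ∀ f ∈ A, Set.MapsTo f (stdCone n) (stdCone n) :=
    fun f hf => (hA f hf).1.1
  have hsingle_mem : ∀ k : Fin n, Pi.single k (1:ℝ) ∈ stdCone n := by
    intro k t
    rcases eq_or_ne t k with rfl | h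
    · simp
    · simp [Pi.single_apply, h]
  constructor
  · -- irreducible → reachability
    intro hirr
    by_contra hc
    push_neg at hc
    obtain ⟨i, j, hij, hno⟩ := hc
    apply hirr
    set S : Set (Fin n) :=
      insert j {i' | ∃ m : ℕ, 0 < m ∧ ∃ f ∈ famPow A m, 0 < f (Pi.single j 1) i'} with hS
    -- key closure property
    have key : ∀ f ∈ A, ∀ k ∈ S, ∀ i' : Fin n, 0 < f (Pi.single k 1) i' → i' ∈ S := by
      intro f hf k hk i' hpos
      rcases hk with rfl | ⟨m, hm, g, hg, hgpos⟩
      · -- k = j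
        refine Or.inr ⟨1, Nat.one_pos, f ∘ id, ⟨f, hf, id, rfl, rfl⟩, ?_⟩
        simpa using hpos
      · -- k reachable from j
        set c := g (Pi.single j 1) k with hc
        have hy : g (Pi.single j 1) ∈ stdCone n :=
          aux_famPow_mapsTo hconeMapsTo m g hg (hsingle_mem j)
        have hx : c • (Pi.single k 1 : Fin n → ℝ) ∈ stdCone n := by
          intro t
          simp only [Pi.smul_apply, smul_eq_mul]
          exact mul_nonneg hgpos.le (hsingle_mem k t)
        have hdiff : g (Pi.single j 1) - c • (Pi.single k 1 : Fin n → ℝ) ∈ stdCone n := by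
          intro t
          rcases eq_or_ne t k with rfl | h
          · simp [hc]
          · have h1 := hy t
            simpa [Pi.single_apply, h] using h1
        have hord := (hA f hf).2.1 (c • (Pi.single k 1 : Fin n → ℝ)) hx (g (Pi.single j 1)) hy hdiff i'
        have hhom := (hA f hf).1.2 c hgpos (Pi.single k 1) (hsingle_mem k)
        rw [hhom] at hord
        simp only [Pi.sub_apply, Pi.smul_apply, smul_eq_mul] at hord
        have hfy : 0 < f (g (Pi.single j 1)) i' := by
          have : 0 < c * f (Pi.single k 1) i' := mul_pos hgpos hpos
          linarith
        exact Or.inr ⟨m + 1, Nat.succ_pos m, f ∘ g, ⟨f, hf, g, hg, rfl⟩, hfy⟩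
    refine ⟨S, ⟨j, Or.inl rfl⟩, ?_, ?_⟩
    · -- S ≠ univ : i ∉ S
      intro hSuniv
      have hiS : i ∈ S := hSuniv ▸ Set.mem_univ i
      rcases hiS with rfl | ⟨m, hm, f, hf, hfpos⟩
      · exact hij rfl
      · exact absurd hfpos (not_lt.mpr (hno m hm f hf))
    · -- invariance of stdFace S
      intro f hf x hx
      have hxcone : x ∈ stdCone n := hx.1
      have hfx : f x ∈ stdCone n := hconeMapsTo f hf hxcone
      refine ⟨hfx, ?_⟩
      intro t ht
      have hdecomp : x = ∑ k : Fin n, Pi.single k (x k) := by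
        funext u; simp [Finset.sum_apply, Pi.single_apply]
      have hle : f x t ≤ ∑ k : Fin n, f (Pi.single k (x k)) t := by
        have := aux_subadd_sum (hA f hf).2.2 (aux_homog_zero (hA f hf).1)
          Finset.univ (fun k => Pi.single k (x k)) (fun k _ => by
            intro u
            rcases eq_or_ne u k with rfl | h
            · simpa using hxcone u
            · simp [Pi.single_apply, h]) t
        rw [← hdecomp] at this
        simpa using this
      have hterm : ∀ k : Fin n, f (Pi.single k (x k)) t = 0 := by
        intro k
        rcases eq_or_lt_of_le (hxcone k) with hz | hp
        · rw [← hz]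
          simp only [Pi.single_zero]
          rw [aux_homog_zero (hA f hf).1]
          rfl
        · -- x k > 0, so k ∈ S
          have hkS : k ∈ S := by
            by_contra hkS
            exact hp.ne' (hx.2 k hkS)
          have hsingle : Pi.single k (x k) = (x k) • (Pi.single k 1 : Fin n → ℝ) := by
            funext u; by_cases h : u = k <;> simp [Pi.single_apply, h]
          rw [hsingle, (hA f hf).1.2 (x k) hp (Pi.single k 1) (hsingle_mem k)]
          have hnonneg : 0 ≤ f (Pi.single k 1) t :=
            hconeMapsTo f hf (hsingle_mem k) t
          have hzero : f (Pi.single k 1) t = 0 := by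
            by_contra hne
            exact ht (key f hf k hkS t (lt_of_le_of_ne hnonneg (Ne.symm hne)))
          simp [hzero]
      have hsum0 : (∑ k : Fin n, f (Pi.single k (x k)) t) = 0 :=
        Finset.sum_eq_zero (fun k _ => hterm k)
      exact le_antisymm (hsum0 ▸ hle) (hfx t)
  · -- reachability → irreducible
    intro hreach
    rintro ⟨J, hJne, hJuniv, hinv⟩
    obtain ⟨j, hj⟩ := hJne
    obtain ⟨i, hi⟩ := (Set.ne_univ_iff_exists_notMem J).mp hJuniv
    have hij : i ≠ j := fun h => hi (h ▸ hj)
    obtain ⟨m, hm, f, hf, hpos⟩ := hreach i j hij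
    have hej : Pi.single j (1:ℝ) ∈ stdFace J := by
      refine ⟨hsingle_mem j, fun k hk => ?_⟩
      have : k ≠ j := fun h => hk (h ▸ hj)
      simp [Pi.single_apply, this]
    have hfej := aux_famPow_mapsTo hinv m f hf hej
    exact hpos.ne' (hfej.2 i hi)
end
end
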